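/- arXiv:2110.05356 — 2 statements merged into one kernel-verified Lean document; each statement's English description precedes it below -/
import Mathlib

section
/- There exists a constant K > 0, not depending on k or N, such that for every N > 2, every k with 2 ≤ k ≤ N, and every vector ν = (ν^{(1)},…,ν^{(N)}) of nonnegative integers summing to N, the identity transition probability p_{ξξ} := (1/(N)_k) Σ_{distinct i_1,…,i_k ∈ [N]} ν^{(i_1)} ⋯ ν^{(i_k)} (where ξ is a partition with k blocks) satisfies p_{ξξ} ≥ 1 − binom(k,2) · (N^{k−2}/((N−2)_{k−2})) · [c + B_k D], where B_k = K (k−1)! (k−2) exp(2√(2(k−2))). -/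
/-
Model the `N` offspring as the pairs `(i, r)` with `r < ν i`, `i` being the parent. Then
`(N)_k · p_{ξξ}` counts the ordered `k`-tuples of distinct offspring with distinct parents. Every
other `k`-tuple of distinct offspring has, at one of the `binom(k,2)` pairs of positions, two
offspring with a common parent, and for a fixed pair of positions there are at most
`Σ_i (ν_i)_2 · (N-2)_{k-2}` such tuples. Since `(N)_k = (N)_2 (N-2)_{k-2}`, this union bound gives
`p_{ξξ} ≥ 1 - binom(k,2) c`, and the claim follows with `K = 1` from `N^{k-2} ≥ (N-2)_{k-2}` and
`D ≥ 0`.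
-/

open Finset

/-- Conditional pair merger probability `c = (1/(N)_2) Σ_i (ν_i)_2`. -/
noncomputable def cOf (N : ℕ) (ν : Fin N → ℕ) : ℝ :=
  (∑ i, ((ν i).descFactorial 2 : ℝ)) / (N.descFactorial 2 : ℝ)

/-- Multiple-merger bound `D = (1/(N (N)_2)) Σ_i (ν_i)_2 [ν_i + (1/N) Σ_{j≠i} ν_j²]`. -/
noncomputable def DOf (N : ℕ) (ν : Fin N → ℕ) : ℝ :=
  (∑ i, ((ν i).descFactorial 2 : ℝ) *
      ((ν i : ℝ) + (∑ j ∈ Finset.univ.erase i, ((ν j : ℝ)) ^ 2) / (N : ℝ))) /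
    ((N : ℝ) * (N.descFactorial 2 : ℝ))

/-- Identity transition probability for a partition with `k` blocks:
`p_{ξξ} = (1/(N)_k) Σ_{distinct i_1,…,i_k} ν^{(i_1)} ⋯ ν^{(i_k)}`. -/
noncomputable def pStayFin (N k : ℕ) (ν : Fin N → ℕ) : ℝ :=
  (∑ g : Fin k ↪ Fin N, ∏ j, (ν (g j) : ℝ)) / (N.descFactorial k : ℝ)

open Function

section Counting

variable {ι α β : Type*} [Fintype ι] [Fintype α] [Fintype β]

theorem Fintype.card_subtype_ne_and_ne [DecidableEq α] {x y : α} (hxy : x ≠ y) :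
    Fintype.card {z // z ≠ x ∧ z ≠ y} = Fintype.card α - 2 := by
  rw [Fintype.card_subtype, ← card_pair hxy, ← card_compl]
  congr 1
  ext z
  simp

theorem card_embedding_apply_eq_and_apply_eq_le [DecidableEq ι] [DecidableEq α] {a b : ι}
    {x y : α} (hab : a ≠ b) (hxy : x ≠ y) :
    #{f : ι ↪ α | f a = x ∧ f b = y} ≤ (Fintype.card α - 2).descFactorial (Fintype.card ι - 2) := by
  rw [← Fintype.card_subtype, ← Fintype.card_subtype_ne_and_ne hab,
    ← Fintype.card_subtype_ne_and_ne hxy, ← Fintype.card_embedding_eq]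
  refine Fintype.card_le_of_injective
    (fun f => f.1.subtypeMap fun j hj => ⟨fun h => hj.1 (f.1.injective (h.trans f.2.1.symm)),
      fun h => hj.2 (f.1.injective (h.trans f.2.2.symm))⟩) fun f g hfg => ?_
  ext j
  by_cases hja : j = a
  · subst hja; rw [f.2.1, g.2.1]
  by_cases hjb : j = b
  · subst hjb; rw [f.2.2, g.2.2]
  exact congrArg Subtype.val (DFunLike.congr_fun hfg ⟨j, hja, hjb⟩)

variable [DecidableEq β] (π : α → β)

theorem card_embedding_injective_comp_eq_sum [DecidableEq ι] :
    #{f : ι ↪ α | Injective (π ∘ f)} = ∑ g : ι ↪ β, ∏ j, #{x | π x = g j} := by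
  rw [card_eq_sum_card_fiberwise (f := fun f : ι ↪ α => π ∘ ⇑f)
    (t := (univ : Finset (ι ↪ β)).map ⟨fun g : ι ↪ β => ⇑g, DFunLike.coe_injective⟩)
    fun f hf => by simpa using ⟨⟨π ∘ f, (mem_filter.1 hf).2⟩, rfl⟩, sum_map]
  refine sum_congr rfl fun g _ => ?_
  rw [← Fintype.card_piFinset]
  refine card_bij (fun f _ => ⇑f) (fun f hf => ?_) (fun f _ f' _ h => DFunLike.coe_injective h)
    fun h hh => ?_
  · simp only [mem_filter, mem_univ, true_and] at hf
    simpa using congrFun hf.2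
  · simp only [Fintype.mem_piFinset, mem_filter, mem_univ, true_and] at hh
    have hg : π ∘ h = g := funext hh
    refine ⟨⟨h, Injective.of_comp (f := π) (hg ▸ g.injective)⟩, ?_, rfl⟩
    simp [hg, g.injective]

theorem card_embedding_comp_apply_eq_comp_apply_le [DecidableEq ι] [DecidableEq α] {a b : ι}
    (hab : a ≠ b) :
    #{f : ι ↪ α | π (f a) = π (f b)} ≤
      (∑ i, (#{x | π x = i}).descFactorial 2) *
        (Fintype.card α - 2).descFactorial (Fintype.card ι - 2) := by
  calc #{f : ι ↪ α | π (f a) = π (f b)}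
      ≤ (Fintype.card α - 2).descFactorial (Fintype.card ι - 2) *
          #(univ.sigma fun i => ({x | π x = i} : Finset α).offDiag) := by
        refine card_le_mul_card_image_of_maps_to (f := fun f => ⟨π (f a), (f a, f b)⟩) ?_ _ ?_
        · intro f hf
          simp only [mem_filter, mem_univ, true_and] at hf
          simp [hf, f.injective.ne hab]
        · rintro ⟨i, x, y⟩ hxy
          simp only [mem_sigma, mem_offDiag, mem_filter, mem_univ, true_and] at hxy
          refine (card_le_card fun f => ?_).trans
            (card_embedding_apply_eq_and_apply_eq_le hab hxy.2.2)
          simp only [mem_filter, mem_univ, true_and, Sigma.mk.injEq, heq_eq_eq, Prod.mk.injEq]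
          exact fun h => h.2.2
    _ = _ := by
        rw [card_sigma, mul_comm]
        simp [offDiag_card, Nat.descFactorial, Nat.sub_one_mul]

theorem card_embedding_not_injective_comp_le [DecidableEq ι] [DecidableEq α] :
    #{f : ι ↪ α | ¬Injective (π ∘ f)} ≤ (Fintype.card ι).choose 2 *
      ((∑ i, (#{x | π x = i}).descFactorial 2) *
        (Fintype.card α - 2).descFactorial (Fintype.card ι - 2)) := by
  calc #{f : ι ↪ α | ¬Injective (π ∘ f)}
      ≤ #((powersetCard 2 univ).biUnion
          fun s => {f : ι ↪ α | ∀ a ∈ s, ∀ b ∈ s, π (f a) = π (f b)}) := by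
        refine card_le_card fun f hf => ?_
        obtain ⟨a, b, hfab, hab⟩ := not_injective_iff.1 (mem_filter.1 hf).2
        refine mem_biUnion.2 ⟨{a, b}, mem_powersetCard.2 ⟨subset_univ _, card_pair hab⟩, ?_⟩
        simp only [mem_filter, mem_univ, true_and, mem_insert, mem_singleton]
        rintro _ (rfl | rfl) _ (rfl | rfl)
        exacts [rfl, hfab, hfab.symm, rfl]
    _ ≤ ∑ s ∈ powersetCard 2 univ, #{f : ι ↪ α | ∀ a ∈ s, ∀ b ∈ s, π (f a) = π (f b)} :=
        card_biUnion_le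
    _ ≤ ∑ s ∈ powersetCard 2 (univ : Finset ι), (∑ i, (#{x | π x = i}).descFactorial 2) *
          (Fintype.card α - 2).descFactorial (Fintype.card ι - 2) := by
        refine sum_le_sum fun s hs => ?_
        obtain ⟨a, b, hab, rfl⟩ := card_eq_two.1 (mem_powersetCard.1 hs).2
        refine (card_le_card fun f hf => ?_).trans
          (card_embedding_comp_apply_eq_comp_apply_le π hab)
        simp only [mem_filter, mem_univ, true_and] at hf ⊢
        exact hf a (by simp) b (by simp)
    _ = _ := by simp

theorem descFactorial_card_le_sum_prod_add [DecidableEq ι] [DecidableEq α] :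
    (Fintype.card α).descFactorial (Fintype.card ι) ≤
      ∑ g : ι ↪ β, ∏ j, #{x | π x = g j} + (Fintype.card ι).choose 2 *
        ((∑ i, (#{x | π x = i}).descFactorial 2) *
          (Fintype.card α - 2).descFactorial (Fintype.card ι - 2)) := by
  rw [← Fintype.card_embedding_eq, ← card_univ,
    ← card_filter_add_card_filter_not (fun f : ι ↪ α => Injective (π ∘ f)),
    card_embedding_injective_comp_eq_sum]
  gcongr
  exact card_embedding_not_injective_comp_le π

end Counting

theorem card_sigma_fst_eq {κ : Type*} [DecidableEq κ] {γ : κ → Type*} [∀ i, Fintype (γ i)]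
    [Fintype κ] (i : κ) : #{x : Σ i, γ i | x.1 = i} = Fintype.card (γ i) := by
  rw [← Fintype.card_subtype, Fintype.card_congr (Equiv.sigmaSubtype i)]

theorem one_sub_choose_mul_cOf_le_pStayFin {N k : ℕ} (ν : Fin N → ℕ) (hν : ∑ i, ν i = N)
    (hk : 2 ≤ k) (hkN : k ≤ N) : 1 - k.choose 2 * cOf N ν ≤ pStayFin N k ν := by
  have hcount := descFactorial_card_le_sum_prod_add (ι := Fin k)
    (Sigma.fst : (Σ i : Fin N, Fin (ν i)) → Fin N)
  simp only [card_sigma_fst_eq, Fintype.card_sigma, Fintype.card_fin, hν] at hcount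
  have hsplit : ((N - 2).descFactorial (k - 2) * N.descFactorial 2 : ℝ) = N.descFactorial k := by
    exact_mod_cast Nat.descFactorial_mul_descFactorial hk
  have hpos : (0 : ℝ) < (N - 2).descFactorial (k - 2) := by
    exact_mod_cast Nat.descFactorial_pos.2 (by omega)
  have hpos2 : (0 : ℝ) < N.descFactorial 2 := by exact_mod_cast Nat.descFactorial_pos.2 (by omega)
  have hcountR := (Nat.cast_le (α := ℝ)).2 hcount
  push_cast [← hsplit] at hcountR
  unfold pStayFin cOf
  rw [← hsplit, le_div_iff₀ (mul_pos hpos hpos2)]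
  field_simp
  linarith

theorem one_le_pow_div_descFactorial_sub {n m j : ℕ} (h : m ≤ n - j) :
    1 ≤ (n : ℝ) ^ m / (n - j).descFactorial m := by
  rw [one_le_div (by exact_mod_cast Nat.descFactorial_pos.2 h)]
  exact_mod_cast (Nat.descFactorial_le_pow _ _).trans (Nat.pow_le_pow_left (Nat.sub_le n j) m)

theorem cOf_nonneg (N : ℕ) (ν : Fin N → ℕ) : 0 ≤ cOf N ν := by
  unfold cOf
  positivity

theorem DOf_nonneg (N : ℕ) (ν : Fin N → ℕ) : 0 ≤ DOf N ν := by
  unfold DOf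
  positivity

theorem stmt4 :
    ∃ K : ℝ, 0 < K ∧ ∀ N k : ℕ, 2 < N → 2 ≤ k → k ≤ N →
      ∀ ν : Fin N → ℕ, (∑ i, ν i) = N →
        1 - (Nat.choose k 2 : ℝ) * ((N : ℝ) ^ (k - 2) / ((N - 2).descFactorial (k - 2) : ℝ)) *
            (cOf N ν + (K * (Nat.factorial (k - 1) : ℝ) * ((k : ℝ) - 2) *
                Real.exp (2 * Real.sqrt (2 * ((k : ℝ) - 2)))) * DOf N ν)
          ≤ pStayFin N k ν := by
  refine ⟨1, one_pos, fun N k _ hk hkN ν hν => ?_⟩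
  refine le_trans ?_ (one_sub_choose_mul_cOf_le_pStayFin ν hν hk hkN)
  have hB : 0 ≤ 1 * (Nat.factorial (k - 1) : ℝ) * ((k : ℝ) - 2) *
      Real.exp (2 * Real.sqrt (2 * ((k : ℝ) - 2))) := by
    have : (2 : ℝ) ≤ k := by exact_mod_cast hk
    have : (0 : ℝ) ≤ k - 2 := by linarith
    positivity
  have hR := one_le_pow_div_descFactorial_sub (n := N) (j := 2) (m := k - 2) (by omega)
  have hc := cOf_nonneg N ν
  gcongr 1 - ?_
  calc (k.choose 2 : ℝ) * cOf N ν
      = k.choose 2 * 1 * (cOf N ν + 0) := by ring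
    _ ≤ _ := by gcongr; exact mul_nonneg hB (DOf_nonneg N ν)
end

section
/- Let (c(r))_{r≥1} and (D(r))_{r≥1} be real sequences with 0 ≤ D(r) ≤ c(r) ≤ 1 for all r, and for t ≥ 0 define τ(t) := inf{s ∈ ℕ : Σ_{r=1}^s c(r) ≥ t}, assumed finite. Fix t > 0, l ∈ ℕ and any constant B > 0. Then Σ_{s_1,…,s_l pairwise distinct, each in {1,…,τ(t)}} Π_{j=1}^l [c(s_j) − B D(s_j)] ≥ Σ_{s_1,…,s_l pairwise distinct, each in {1,…,τ(t)}} Π_{j=1}^l c(s_j) − (Σ_{s=1}^{τ(t)} D(s)) (t+1)^{l−1} (1+B)^l. -/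
/-- The time change `τ(t) = inf{s ∈ ℕ : Σ_{r=1}^s c(r) ≥ t}`. -/
noncomputable def tauOf (c : ℕ → ℝ) (t : ℝ) : ℕ :=
  sInf {s : ℕ | t ≤ ∑ r ∈ Finset.Icc 1 s, c r}

/-- Sum over tuples `(s_1,…,s_l)` of pairwise distinct elements of `S` of the
products `Π_{j=1}^l f(s_j)`. -/
noncomputable def distinctSum (f : ℕ → ℝ) (l : ℕ) (S : Finset ℕ) : ℝ :=
  ∑ g ∈ (Fintype.piFinset fun _ : Fin l => S).filter fun g => Function.Injective g,
    ∏ j, f (g j)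

/-!
For `a, e ≥ 0`, expanding `∏ (a + e) + ∏ (a - e)` keeps only the terms with an even number of
factors `e`, so `∏ a - ∏ (a - e) ≤ ∏ (a + e) - ∏ a`. With `e = B D`, summing over distinct tuples
and then (the summands being nonnegative) over all tuples turns the right side into
`(x + B y)^l - x^l`, where `x = Σ c` and `y = Σ D` over `{1, …, τ(t)}`. Since `y ≤ x`, the
factorization `X^l - x^l = (X - x) Σ_{i<l} X^i x^(l-1-i)` bounds this by
`y x^(l-1) ((1 + B)^l - 1)`, and `x ≤ t + 1` by the minimality of `τ(t)` and `c ≤ 1`.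
-/

open Finset

section OrderedRing

variable {ι R : Type*} [CommRing R] [LinearOrder R] [IsStrictOrderedRing R]

theorem two_mul_prod_le_prod_add_add_prod_sub (s : Finset ι) {a e : ι → R}
    (ha : ∀ i ∈ s, 0 ≤ a i) (he : ∀ i ∈ s, 0 ≤ e i) :
    2 * ∏ i ∈ s, a i ≤ ∏ i ∈ s, (a i + e i) + ∏ i ∈ s, (a i - e i) := by
  classical
  induction s using Finset.induction_on with
  | empty => norm_num
  | insert j s hj ih =>
    rw [forall_mem_insert] at ha he
    have hsub : ∏ i ∈ s, (a i - e i) ≤ ∏ i ∈ s, (a i + e i) := by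
      refine (le_abs_self _).trans ?_
      rw [abs_prod]
      refine prod_le_prod (fun i _ => abs_nonneg _) fun i hi => ?_
      calc |a i - e i| ≤ |a i| + |e i| := abs_sub _ _
        _ = a i + e i := by rw [abs_of_nonneg (ha.2 i hi), abs_of_nonneg (he.2 i hi)]
    have hsum := ih ha.2 he.2
    simp only [prod_insert hj]
    nlinarith [mul_le_mul_of_nonneg_left hsum ha.1, mul_le_mul_of_nonneg_left hsub he.1]

theorem add_mul_pow_le {x y B : R} (hy : 0 ≤ y) (hyx : y ≤ x) (hB : 0 ≤ B) (n : ℕ) :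
    (x + B * y) ^ n ≤ x ^ n + y * x ^ (n - 1) * ((1 + B) ^ n - 1) := by
  have hx : 0 ≤ x := hy.trans hyx
  have hterm : ∀ i ∈ range n, (x + B * y) ^ i * x ^ (n - 1 - i) ≤ (1 + B) ^ i * x ^ (n - 1) := by
    intro i hi
    have hi : i ≤ n - 1 := by have := mem_range.1 hi; omega
    calc (x + B * y) ^ i * x ^ (n - 1 - i) ≤ ((1 + B) * x) ^ i * x ^ (n - 1 - i) := by
          gcongr
          nlinarith
      _ = (1 + B) ^ i * x ^ (n - 1) := by rw [mul_pow, mul_assoc, pow_mul_pow_sub x hi]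
  have hgeom := geom_sum₂_mul (x + B * y) x n
  have hgeom' := geom_sum_mul (1 + B) n
  rw [add_sub_cancel_left] at hgeom hgeom'
  calc (x + B * y) ^ n
      = x ^ n + (∑ i ∈ range n, (x + B * y) ^ i * x ^ (n - 1 - i)) * (B * y) := by
        rw [hgeom]; ring
    _ ≤ x ^ n + (∑ i ∈ range n, (1 + B) ^ i * x ^ (n - 1)) * (B * y) := by
        gcongr x ^ n + ?_ * _
        exact sum_le_sum hterm
    _ = x ^ n + y * x ^ (n - 1) * ((1 + B) ^ n - 1) := by
        rw [← sum_mul, ← hgeom']; ring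

end OrderedRing

section DistinctSum

variable {f g : ℕ → ℝ} {S : Finset ℕ}

theorem distinctSum_sub_distinctSum_sub_le (hf : ∀ r ∈ S, 0 ≤ f r) (hg : ∀ r ∈ S, 0 ≤ g r)
    (l : ℕ) :
    distinctSum f l S - distinctSum (fun r => f r - g r) l S
      ≤ distinctSum (fun r => f r + g r) l S - distinctSum f l S := by
  simp only [distinctSum, ← sum_sub_distrib]
  refine sum_le_sum fun v hv => ?_
  have hvS : ∀ j, v j ∈ S := fun j => Fintype.mem_piFinset.1 (mem_filter.1 hv).1 j
  have hprod := two_mul_prod_le_prod_add_add_prod_sub univ (a := fun j => f (v j))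
    (e := fun j => g (v j)) (fun j _ => hf _ (hvS j)) (fun j _ => hg _ (hvS j))
  linarith

theorem distinctSum_sub_distinctSum_le (hf : ∀ r ∈ S, 0 ≤ f r) (hfg : ∀ r ∈ S, f r ≤ g r)
    (l : ℕ) :
    distinctSum g l S - distinctSum f l S ≤ (∑ r ∈ S, g r) ^ l - (∑ r ∈ S, f r) ^ l := by
  have hprod : ∀ v ∈ Fintype.piFinset fun _ : Fin l => S, ∏ j, f (v j) ≤ ∏ j, g (v j) :=
    fun v hv => prod_le_prod (fun j _ => hf _ (Fintype.mem_piFinset.1 hv j))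
      fun j _ => hfg _ (Fintype.mem_piFinset.1 hv j)
  calc distinctSum g l S - distinctSum f l S
      = ∑ v ∈ (Fintype.piFinset fun _ : Fin l => S).filter fun v => Function.Injective v,
          (∏ j, g (v j) - ∏ j, f (v j)) := by
        simp only [distinctSum, sum_sub_distrib]
    _ ≤ ∑ v ∈ Fintype.piFinset fun _ : Fin l => S, (∏ j, g (v j) - ∏ j, f (v j)) :=
        sum_le_sum_of_subset_of_nonneg (filter_subset _ _) fun v hv _ =>
          sub_nonneg.2 (hprod v hv)
    _ = (∑ r ∈ S, g r) ^ l - (∑ r ∈ S, f r) ^ l := by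
        simp only [sum_sub_distrib, sum_prod_piFinset, prod_const, card_univ, Fintype.card_fin]

end DistinctSum

theorem sum_Icc_tauOf_le {c : ℕ → ℝ} (hc : ∀ r, c r ≤ 1) {t : ℝ} (ht : -1 ≤ t) :
    ∑ r ∈ Icc 1 (tauOf c t), c r ≤ t + 1 := by
  rcases Nat.eq_zero_or_eq_succ_pred (tauOf c t) with h | h
  · rw [h, Icc_eq_empty_of_lt zero_lt_one, sum_empty]
    linarith
  · have hpred : (tauOf c t).pred < tauOf c t := by omega
    have hlt : ∑ r ∈ Icc 1 (tauOf c t).pred, c r < t := not_le.1 (Nat.notMem_of_lt_sInf hpred)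
    rw [h, sum_Icc_succ_top (by omega)]
    linarith [hc (tauOf c t).pred.succ]

theorem distinctSum_sub_mul_le {c D : ℕ → ℝ} {S : Finset ℕ} (hD : ∀ r ∈ S, 0 ≤ D r)
    (hDc : ∀ r ∈ S, D r ≤ c r) {B : ℝ} (hB : 0 ≤ B) (l : ℕ) :
    distinctSum c l S - (∑ r ∈ S, D r) * (∑ r ∈ S, c r) ^ (l - 1) * ((1 + B) ^ l - 1)
      ≤ distinctSum (fun r => c r - B * D r) l S := by
  have hc : ∀ r ∈ S, 0 ≤ c r := fun r hr => (hD r hr).trans (hDc r hr)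
  have hBD : ∀ r ∈ S, 0 ≤ B * D r := fun r hr => mul_nonneg hB (hD r hr)
  have hsub := distinctSum_sub_distinctSum_sub_le hc hBD l
  have hadd := distinctSum_sub_distinctSum_le hc (fun r hr => le_add_of_nonneg_right (hBD r hr)) l
  rw [sum_add_distrib, ← mul_sum] at hadd
  have hpow := add_mul_pow_le (sum_nonneg hD) (sum_le_sum hDc) hB l
  linarith

theorem stmt10_general (c D : ℕ → ℝ) (hcD : ∀ r, 0 ≤ D r ∧ D r ≤ c r ∧ c r ≤ 1)
    (t : ℝ) (ht : 0 < t) (l : ℕ) (B : ℝ) (hB : 0 < B) :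
    distinctSum c l (Finset.Icc 1 (tauOf c t)) -
        (∑ s ∈ Finset.Icc 1 (tauOf c t), D s) * (t + 1) ^ (l - 1) * (1 + B) ^ l
      ≤ distinctSum (fun r => c r - B * D r) l (Finset.Icc 1 (tauOf c t)) := by
  set T := Icc 1 (tauOf c t)
  have hmain := distinctSum_sub_mul_le (fun r _ => (hcD r).1) (fun r _ => (hcD r).2.1) hB.le l
    (S := T)
  have hy : 0 ≤ ∑ r ∈ T, D r := sum_nonneg fun r _ => (hcD r).1
  have hx : ∑ r ∈ T, c r ≤ t + 1 := sum_Icc_tauOf_le (fun r => (hcD r).2.2) (by linarith)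
  have hx₀ : 0 ≤ ∑ r ∈ T, c r := sum_nonneg fun r _ => (hcD r).1.trans (hcD r).2.1
  have hloss : (∑ r ∈ T, D r) * (∑ r ∈ T, c r) ^ (l - 1) * ((1 + B) ^ l - 1)
      ≤ (∑ r ∈ T, D r) * (t + 1) ^ (l - 1) * (1 + B) ^ l :=
    mul_le_mul (mul_le_mul_of_nonneg_left (pow_le_pow_left₀ hx₀ hx _) hy)
      (sub_le_self _ zero_le_one) (sub_nonneg.2 (one_le_pow₀ (by linarith)))
      (mul_nonneg hy (by positivity))
  linarith

theorem stmt10 (c D : ℕ → ℝ) (hcD : ∀ r, 0 ≤ D r ∧ D r ≤ c r ∧ c r ≤ 1)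
    (hfin : ∀ u : ℝ, 0 ≤ u → ∃ s : ℕ, u ≤ ∑ r ∈ Finset.Icc 1 s, c r)
    (t : ℝ) (ht : 0 < t) (l : ℕ) (hl : 1 ≤ l) (B : ℝ) (hB : 0 < B) :
    distinctSum c l (Finset.Icc 1 (tauOf c t)) -
        (∑ s ∈ Finset.Icc 1 (tauOf c t), D s) * (t + 1) ^ (l - 1) * (1 + B) ^ l
      ≤ distinctSum (fun r => c r - B * D r) l (Finset.Icc 1 (tauOf c t)) :=
  stmt10_general c D hcD t ht l B hB
end
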